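/- arXiv:1905.03927 — 2 statements merged into one kernel-verified Lean document; each statement's English description precedes it below -/
import Mathlib

section
/- Let S and A be finite nonempty sets, p : S × A × S → ℝ with p(j|i,a) ≥ 0 and Σ_{j∈S} p(j|i,a) = 1 for all (i,a), r : S × A → ℝ, 0 ≤ γ < 1, and N > 0. The modified Bellman operator U, (UQ)(i,a) = r(i,a) + γ·Σ_{j∈S} p(j|i,a)·(1/N)·log(Σ_{b∈A} e^{N·Q(j,b)}), has a unique fixed point Q' : S × A → ℝ satisfying Q' = UQ'. -/
/-- The modified (log-sum-exp) Bellman operator `U`: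
`(UQ)(i,a) = r(i,a) + γ·Σ_j p(j|i,a)·(1/N)·log(Σ_b e^{N·Q(j,b)})`. -/
noncomputable def modBellmanU {S A : Type*} [Fintype S] [Fintype A]
    (p : S → A → S → ℝ) (r : S → A → ℝ) (γ N : ℝ) (Q : S → A → ℝ) : S → A → ℝ :=
  fun i a => r i a + γ * ∑ j, p i a j *
    ((1 / N) * Real.log (∑ b, Real.exp (N * Q j b)))

/-!
`U Q (i,a) = r(i,a) + γ · E_{p(·|i,a)}[smax_N (Q j)]` with the smooth maximum
`smax_N f = (1/N) log Σ_b e^{N f b}`. The smooth maximum is monotone and commutes with adding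
constants, hence 1-Lipschitz for the sup metric, and averaging against a probability vector is
1-Lipschitz too. So `U` is a `γ`-contraction of the complete space `S → A → ℝ`, and Banach's fixed
point theorem applies.
-/

open Real

theorem LipschitzWith.of_forall_apply {α ι : Type*} [PseudoEMetricSpace α] [Fintype ι]
    {β : ι → Type*} [∀ i, PseudoEMetricSpace (β i)] {K : NNReal} {f : α → ∀ i, β i}
    (h : ∀ i, LipschitzWith K fun x => f x i) : LipschitzWith K f :=
  fun x y => edist_pi_le_iff.2 fun i => h i x y

theorem le_add_dist_pi {ι : Type*} [Fintype ι] (x y : ι → ℝ) (i : ι) :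
    x i ≤ y i + dist x y := by
  linarith [Real.sub_le_dist (x i) (y i), dist_le_pi_dist x y i]

theorem lipschitzWith_one_sum_mul {S : Type*} [Fintype S] {p : S → ℝ} (hp0 : ∀ j, 0 ≤ p j)
    (hp1 : ∑ j, p j = 1) : LipschitzWith 1 fun x : S → ℝ => ∑ j, p j * x j := by
  refine LipschitzWith.of_le_add fun x y => ?_
  calc ∑ j, p j * x j ≤ ∑ j, p j * (y j + dist x y) :=
        Finset.sum_le_sum fun j _ => mul_le_mul_of_nonneg_left (le_add_dist_pi x y j) (hp0 j)
    _ = ∑ j, p j * y j + dist x y := by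
        simp only [mul_add, Finset.sum_add_distrib, ← Finset.sum_mul, hp1, one_mul]

section SmoothMax

variable {A : Type*} [Fintype A]

noncomputable def smoothMax (N : ℝ) (f : A → ℝ) : ℝ :=
  (1 / N) * log (∑ b, exp (N * f b))

theorem smoothMax_add_const [Nonempty A] {N : ℝ} (hN : N ≠ 0) (f : A → ℝ) (c : ℝ) :
    smoothMax N (fun b => f b + c) = smoothMax N f + c := by
  have hsum : ∑ b, exp (N * (f b + c)) = exp (N * c) * ∑ b, exp (N * f b) := by
    simp only [Finset.mul_sum, ← exp_add, mul_add, add_comm]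
  have hpos : 0 < ∑ b, exp (N * f b) := Finset.sum_pos (fun b _ => exp_pos _) Finset.univ_nonempty
  rw [smoothMax, smoothMax, hsum, log_mul (exp_ne_zero _) hpos.ne', log_exp]
  field_simp
  ring

theorem smoothMax_mono [Nonempty A] {N : ℝ} (hN : 0 < N) : Monotone (smoothMax (A := A) N) := by
  intro f g hfg
  have hpos : 0 < ∑ b, exp (N * f b) := Finset.sum_pos (fun b _ => exp_pos _) Finset.univ_nonempty
  refine mul_le_mul_of_nonneg_left (log_le_log hpos ?_) (by positivity)
  exact Finset.sum_le_sum fun b _ => exp_le_exp.2 (mul_le_mul_of_nonneg_left (hfg b) hN.le)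

theorem lipschitzWith_one_smoothMax [Nonempty A] {N : ℝ} (hN : 0 < N) :
    LipschitzWith 1 (smoothMax (A := A) N) :=
  LipschitzWith.of_le_add fun f g =>
    calc smoothMax N f ≤ smoothMax N (fun b => g b + dist f g) :=
          smoothMax_mono hN fun b => le_add_dist_pi f g b
      _ = smoothMax N g + dist f g := smoothMax_add_const hN.ne' g _

end SmoothMax

theorem lipschitzWith_modBellmanU {S A : Type*} [Fintype S] [Fintype A] [Nonempty A]
    {p : S → A → S → ℝ} (hp0 : ∀ i a j, 0 ≤ p i a j) (hp1 : ∀ i a, ∑ j, p i a j = 1)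
    (r : S → A → ℝ) {γ : ℝ} (hγ0 : 0 ≤ γ) {N : ℝ} (hN : 0 < N) :
    LipschitzWith ⟨γ, hγ0⟩ (modBellmanU p r γ N) := by
  refine LipschitzWith.of_forall_apply fun i => LipschitzWith.of_forall_apply fun a => ?_
  have hsmax : LipschitzWith 1 fun Q : S → A → ℝ => fun j => smoothMax N (Q j) :=
    LipschitzWith.of_forall_apply fun j => by
      simpa [Function.comp_def] using (lipschitzWith_one_smoothMax hN).comp (LipschitzWith.eval j)
  refine LipschitzWith.of_le_add_mul _ fun Q Q' => ?_
  have havg : ∑ j, p i a j * smoothMax N (Q j) ≤ ∑ j, p i a j * smoothMax N (Q' j) + dist Q Q' := by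
    simpa using ((lipschitzWith_one_sum_mul (hp0 i a) (hp1 i a)).comp hsmax).le_add_mul Q Q'
  show r i a + γ * ∑ j, p i a j * smoothMax N (Q j)
    ≤ r i a + γ * ∑ j, p i a j * smoothMax N (Q' j) + γ * dist Q Q'
  linarith [mul_le_mul_of_nonneg_left havg hγ0]

theorem modBellmanU_exists_unique_fixedPoint_general {S A : Type*}
    [Fintype S] [Fintype A] [Nonempty A]
    (p : S → A → S → ℝ) (hp0 : ∀ i a j, 0 ≤ p i a j) (hp1 : ∀ i a, ∑ j, p i a j = 1)
    (r : S → A → ℝ) (γ : ℝ) (hγ0 : 0 ≤ γ) (hγ1 : γ < 1) (N : ℝ) (hN : 0 < N) :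
    ∃! Q' : S → A → ℝ, modBellmanU p r γ N Q' = Q' := by
  have hU : ContractingWith ⟨γ, hγ0⟩ (modBellmanU p r γ N) :=
    ⟨hγ1, lipschitzWith_modBellmanU hp0 hp1 r hγ0 hN⟩
  exact ⟨hU.fixedPoint, hU.fixedPoint_isFixedPt, fun Q hQ => hU.fixedPoint_unique hQ⟩

/-- The modified Bellman operator has a unique fixed point `Q' = UQ'`. -/
theorem modBellmanU_exists_unique_fixedPoint {S A : Type*}
    [Fintype S] [Fintype A] [Nonempty S] [Nonempty A]
    (p : S → A → S → ℝ) (hp0 : ∀ i a j, 0 ≤ p i a j) (hp1 : ∀ i a, ∑ j, p i a j = 1)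
    (r : S → A → ℝ) (γ : ℝ) (hγ0 : 0 ≤ γ) (hγ1 : γ < 1) (N : ℝ) (hN : 0 < N) :
    ∃! Q' : S → A → ℝ, modBellmanU p r γ N Q' = Q' :=
  modBellmanU_exists_unique_fixedPoint_general p hp0 hp1 r γ hγ0 hγ1 N hN
end

section
/- Let S and A be finite nonempty sets, p : S × A × S → ℝ with p(j|i,a) ≥ 0 and Σ_{j∈S} p(j|i,a) = 1 for all (i,a), r : S × A → ℝ, 0 ≤ γ < 1, and N > 0. If Q is a fixed point of the Q-Bellman operator T, (TQ)(i,a) = r(i,a) + γ·Σ_{j∈S} p(j|i,a)·max_{b∈A} Q(j,b), and Q' is a fixed point of the modified Bellman operator U, (UQ)(i,a) = r(i,a) + γ·Σ_{j∈S} p(j|i,a)·(1/N)·log(Σ_{b∈A} e^{N·Q(j,b)}), then ‖Q − Q'‖ ≤ (γ/(N·(1−γ)))·log|A|, where ‖·‖ denotes the sup norm and |A| is the cardinality of A. -/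
/-- The Q-Bellman operator `T`:
`(TQ)(i,a) = r(i,a) + γ·Σ_j p(j|i,a)·max_b Q(j,b)`. -/
noncomputable def bellmanT {S A : Type*} [Fintype S] [Fintype A] [Nonempty A]
    (p : S → A → S → ℝ) (r : S → A → ℝ) (γ : ℝ) (Q : S → A → ℝ) : S → A → ℝ :=
  fun i a => r i a + γ * ∑ j, p i a j *
    Finset.univ.sup' Finset.univ_nonempty (fun b => Q j b)

/-- Sup norm of a Q-function: `‖Q‖ = max_{(i,a)} |Q(i,a)|`. -/
noncomputable def qSupNorm {S A : Type*} [Fintype S] [Fintype A] [Nonempty S] [Nonempty A]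
    (Q : S → A → ℝ) : ℝ :=
  Finset.univ.sup' Finset.univ_nonempty (fun ia : S × A => |Q ia.1 ia.2|)

/-!
The log-sum-exp `(1/N) log Σ_b e^{N x_b}` lies between `max_b x_b` and `max_b x_b + log |A| / N`,
and the maximum is 1-Lipschitz for the sup norm. Averaging against `p(·|i,a)` therefore gives
`|TQ - UQ'| ≤ γ (‖Q - Q'‖ + log |A| / N)` pointwise; at fixed points the left side is
`|Q - Q'|`, so `‖Q - Q'‖ ≤ γ (‖Q - Q'‖ + log |A| / N)`, which rearranges to the claim since `γ < 1`.
-/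

open Finset Real

lemma Finset.abs_sup'_sub_sup'_le {ι : Type*} {s : Finset ι} (hs : s.Nonempty) {f g : ι → ℝ}
    {C : ℝ} (h : ∀ b ∈ s, |f b - g b| ≤ C) : |s.sup' hs f - s.sup' hs g| ≤ C := by
  have hfg : s.sup' hs f ≤ s.sup' hs g + C := by
    rw [sup'_add]
    exact sup'_mono_fun fun b hb => by linarith [(abs_le.1 (h b hb)).2]
  have hgf : s.sup' hs g ≤ s.sup' hs f + C := by
    rw [sup'_add]
    exact sup'_mono_fun fun b hb => by linarith [(abs_le.1 (h b hb)).1]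
  exact abs_le.2 ⟨by linarith, by linarith⟩

section LogSumExp

variable {ι : Type*} [Fintype ι] [Nonempty ι] {N : ℝ}

lemma sup'_le_log_sum_exp (hN : 0 < N) (f : ι → ℝ) :
    univ.sup' univ_nonempty f ≤ 1 / N * log (∑ b, exp (N * f b)) := by
  refine sup'_le _ _ fun b _ => ?_
  have hexp : exp (N * f b) ≤ ∑ b, exp (N * f b) :=
    single_le_sum (f := fun b => exp (N * f b)) (fun b _ => (exp_pos _).le) (mem_univ b)
  have hlog : N * f b ≤ log (∑ b, exp (N * f b)) := by
    simpa only [log_exp] using log_le_log (exp_pos _) hexp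
  rw [one_div_mul_eq_div, le_div_iff₀ hN]
  linarith

lemma log_sum_exp_le_sup'_add (hN : 0 < N) (f : ι → ℝ) :
    1 / N * log (∑ b, exp (N * f b)) ≤
      univ.sup' univ_nonempty f + 1 / N * log (Fintype.card ι) := by
  set M := univ.sup' univ_nonempty f
  have hsum : ∑ b, exp (N * f b) ≤ Fintype.card ι * exp (N * M) := by
    calc ∑ b, exp (N * f b) ≤ ∑ _b : ι, exp (N * M) :=
          sum_le_sum fun b _ => exp_le_exp.2 <|
            mul_le_mul_of_nonneg_left (le_sup' f (mem_univ b)) hN.le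
      _ = Fintype.card ι * exp (N * M) := by simp
  have hlog : log (∑ b, exp (N * f b)) ≤ log (Fintype.card ι) + N * M := by
    calc log (∑ b, exp (N * f b)) ≤ log (Fintype.card ι * exp (N * M)) :=
          log_le_log (sum_pos (fun b _ => exp_pos _) univ_nonempty) hsum
      _ = log (Fintype.card ι) + N * M := by
          rw [log_mul (by positivity) (exp_ne_zero _), log_exp]
  calc 1 / N * log (∑ b, exp (N * f b)) ≤ 1 / N * (log (Fintype.card ι) + N * M) :=
        mul_le_mul_of_nonneg_left hlog (by positivity)
    _ = M + 1 / N * log (Fintype.card ι) := by field_simp; ring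

lemma abs_sup'_sub_log_sum_exp_le (hN : 0 < N) {f g : ι → ℝ} {C : ℝ} (h : ∀ b, |f b - g b| ≤ C) :
    |univ.sup' univ_nonempty f - 1 / N * log (∑ b, exp (N * g b))| ≤
      C + 1 / N * log (Fintype.card ι) := by
  have hfg := abs_le.1 (abs_sup'_sub_sup'_le univ_nonempty fun b _ => h b)
  have hlower := sup'_le_log_sum_exp hN g
  have hupper := log_sum_exp_le_sup'_add hN g
  have hcard : 0 ≤ 1 / N * log (Fintype.card ι) :=
    mul_nonneg (by positivity) (log_nonneg (by exact_mod_cast Fintype.card_pos))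
  exact abs_le.2 ⟨by linarith, by linarith⟩

end LogSumExp

lemma Finset.abs_sum_mul_le_of_sum_eq_one {ι : Type*} {s : Finset ι} {w x : ι → ℝ} {C : ℝ}
    (hw0 : ∀ j ∈ s, 0 ≤ w j) (hw1 : ∑ j ∈ s, w j = 1) (hx : ∀ j ∈ s, |x j| ≤ C) :
    |∑ j ∈ s, w j * x j| ≤ C := by
  calc |∑ j ∈ s, w j * x j| ≤ ∑ j ∈ s, |w j * x j| := abs_sum_le_sum_abs _ _
    _ ≤ ∑ j ∈ s, w j * C := sum_le_sum fun j hj => by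
        rw [abs_mul, abs_of_nonneg (hw0 j hj)]
        exact mul_le_mul_of_nonneg_left (hx j hj) (hw0 j hj)
    _ = C := by rw [← sum_mul, hw1, one_mul]

section Bellman

variable {S A : Type*} [Fintype S] [Fintype A]

lemma bellmanT_sub_modBellmanU [Nonempty A] (p : S → A → S → ℝ) (r : S → A → ℝ) (γ N : ℝ)
    (Q Q' : S → A → ℝ) (i : S) (a : A) :
    bellmanT p r γ Q i a - modBellmanU p r γ N Q' i a =
      γ * ∑ j, p i a j * (univ.sup' univ_nonempty (Q j) -
        1 / N * log (∑ b, exp (N * Q' j b))) := by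
  simp only [bellmanT, modBellmanU, mul_sub, sum_sub_distrib]
  ring

lemma abs_bellmanT_sub_modBellmanU_le [Nonempty A] {p : S → A → S → ℝ}
    (hp0 : ∀ i a j, 0 ≤ p i a j) (hp1 : ∀ i a, ∑ j, p i a j = 1) (r : S → A → ℝ) {γ N : ℝ}
    (hγ : 0 ≤ γ) (hN : 0 < N) {Q Q' : S → A → ℝ} {C : ℝ} (h : ∀ j b, |Q j b - Q' j b| ≤ C)
    (i : S) (a : A) :
    |bellmanT p r γ Q i a - modBellmanU p r γ N Q' i a| ≤
      γ * (C + 1 / N * log (Fintype.card A)) := by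
  rw [bellmanT_sub_modBellmanU, abs_mul, abs_of_nonneg hγ]
  exact mul_le_mul_of_nonneg_left
    (abs_sum_mul_le_of_sum_eq_one (fun j _ => hp0 i a j) (hp1 i a)
      fun j _ => abs_sup'_sub_log_sum_exp_le hN (h j)) hγ

variable [Nonempty S] [Nonempty A]

lemma abs_le_qSupNorm (Q : S → A → ℝ) (i : S) (a : A) : |Q i a| ≤ qSupNorm Q :=
  le_sup' (fun ia : S × A => |Q ia.1 ia.2|) (mem_univ (i, a))

lemma qSupNorm_le {Q : S → A → ℝ} {C : ℝ} (h : ∀ i a, |Q i a| ≤ C) : qSupNorm Q ≤ C :=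
  sup'_le _ _ fun ia _ => h ia.1 ia.2

end Bellman

/-- If `Q` is a fixed point of `T` and `Q'` a fixed point of `U`, then
`‖Q − Q'‖ ≤ (γ/(N(1−γ)))·log |A|`. -/
theorem fixedPoint_dist_le {S A : Type*} [Fintype S] [Fintype A] [Nonempty S] [Nonempty A]
    (p : S → A → S → ℝ) (hp0 : ∀ i a j, 0 ≤ p i a j) (hp1 : ∀ i a, ∑ j, p i a j = 1)
    (r : S → A → ℝ) (γ : ℝ) (hγ0 : 0 ≤ γ) (hγ1 : γ < 1) (N : ℝ) (hN : 0 < N)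
    (Q Q' : S → A → ℝ) (hQ : bellmanT p r γ Q = Q) (hQ' : modBellmanU p r γ N Q' = Q') :
    qSupNorm (fun i a => Q i a - Q' i a) ≤
      γ / (N * (1 - γ)) * Real.log (Fintype.card A) := by
  set M := qSupNorm (fun i a => Q i a - Q' i a)
  have hM : M ≤ γ * (M + 1 / N * log (Fintype.card A)) := by
    refine qSupNorm_le fun i a => ?_
    rw [← hQ, ← hQ']
    exact abs_bellmanT_sub_modBellmanU_le hp0 hp1 r hγ0 hN
      (abs_le_qSupNorm (fun i a => Q i a - Q' i a)) i a
  rw [div_mul_eq_mul_div, le_div_iff₀ (mul_pos hN (sub_pos.2 hγ1))]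
  calc M * (N * (1 - γ)) = N * (M - γ * M) := by ring
    _ ≤ N * (γ * (1 / N * log (Fintype.card A))) := by gcongr; linarith
    _ = γ * log (Fintype.card A) := by field_simp
end
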